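/- For N ≥ 1, let μ_N = 2^{-N} ∑_{i=0}^{N} C(N,i) δ_{2i/N} be the spectral measure of the hypercube graph on 2^N vertices. Then d₁^W(μ_N, μ_{N+1}) = 1/(N+1). -/

import Mathlib

open MeasureTheory ENNReal

/-- The `p`-Wasserstein distance between two measures on `ℝ`, defined as the
infimum of transport costs over all couplings. -/
noncomputable def wassersteinDist (p : ℝ) (μ ν : Measure ℝ) : ℝ :=
  sInf {c : ℝ | ∃ π : Measure (ℝ × ℝ),
    π.map Prod.fst = μ ∧ π.map Prod.snd = ν ∧
    c = (∫ z : ℝ × ℝ, |z.1 - z.2| ^ p ∂π) ^ (1 / p)}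
/-- The spectral measure of the hypercube graph on `2^N` vertices. -/
noncomputable def cubeSpectralMeasure (N : ℕ) : Measure ℝ :=
  ((2 ^ N : ℝ≥0∞))⁻¹ •
    ∑ i ∈ Finset.range (N + 1),
      (N.choose i : ℝ≥0∞) • Measure.dirac ((2 * (i : ℝ)) / N)

/-!
The transport plan that splits each atom `2s/N` of `μ_N` evenly between its neighbours
`2s/(N+1) ≤ 2s/N ≤ 2(s+1)/(N+1)` among the atoms of `μ_{N+1}` costs `1/(N+1)`: the two halves
travel distances adding up to `2/(N+1)`. It is optimal by the easy half of
Kantorovich–Rubinstein duality: a 1-Lipschitz zigzag `g`, rising on `[2s/(N+1), 2s/N]` and falling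
on `[2s/N, 2(s+1)/(N+1)]`, satisfies `g x - g y = |x - y|` on the support of the plan, so every
coupling `π` costs at least `∫ g dμ_N - ∫ g dμ_{N+1}`, which is the cost of the plan.
-/

open Finset

section Coupling

variable {μ ν : Measure ℝ} {π : Measure (ℝ × ℝ)}

lemma integral_comp_fst_sub_comp_snd (h₁ : π.map Prod.fst = μ) (h₂ : π.map Prod.snd = ν)
    {g : ℝ → ℝ} (hgμ : Integrable g μ) (hgν : Integrable g ν) :
    ∫ z, (g z.1 - g z.2) ∂π = ∫ x, g x ∂μ - ∫ x, g x ∂ν := by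
  subst h₁ h₂
  rw [integral_map measurable_fst.aemeasurable hgμ.aestronglyMeasurable,
    integral_map measurable_snd.aemeasurable hgν.aestronglyMeasurable]
  exact integral_sub (hgμ.comp_measurable measurable_fst) (hgν.comp_measurable measurable_snd)

theorem integral_sub_le_integral_abs_sub_of_lipschitzWith (h₁ : π.map Prod.fst = μ)
    (h₂ : π.map Prod.snd = ν) (hμ : Integrable id μ) (hν : Integrable id ν) {g : ℝ → ℝ}
    (hg : LipschitzWith 1 g) (hgμ : Integrable g μ) (hgν : Integrable g ν) :
    ∫ x, g x ∂μ - ∫ x, g x ∂ν ≤ ∫ z, |z.1 - z.2| ∂π := by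
  rw [← integral_comp_fst_sub_comp_snd h₁ h₂ hgμ hgν]
  subst h₁ h₂
  have hcost : Integrable (fun z : ℝ × ℝ => |z.1 - z.2|) π :=
    ((hμ.comp_measurable measurable_fst).sub (hν.comp_measurable measurable_snd)).abs
  refine integral_mono ((hgμ.comp_measurable measurable_fst).sub
    (hgν.comp_measurable measurable_snd)) hcost fun z => ?_
  simpa [Real.dist_eq] using (le_abs_self _).trans (hg.dist_le_mul z.1 z.2)

end Coupling

lemma lipschitzWith_inf'_add_abs_sub {ι : Type*} {s : Finset ι} (hs : s.Nonempty) (c a : ι → ℝ) :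
    LipschitzWith 1 fun x => s.inf' hs fun i => c i + |x - a i| := by
  refine LipschitzWith.of_le_add fun x y => ?_
  obtain ⟨i, hi, hy⟩ := s.exists_mem_eq_inf' hs fun i => c i + |y - a i|
  rw [hy, Real.dist_eq]
  calc s.inf' hs (fun i => c i + |x - a i|) ≤ c i + |x - a i| := inf'_le _ hi
    _ ≤ c i + |y - a i| + |x - y| := by linarith [abs_sub_le x y (a i)]

section FiniteAtomic

variable {α ι : Type*} [MeasurableSpace α] [MeasurableSingletonClass α]

lemma integrable_finset_sum_smul_dirac (s : Finset ι) (w : ι → ℕ) (x : ι → α) (f : α → ℝ) :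
    Integrable f (∑ i ∈ s, (w i : ℝ≥0∞) • Measure.dirac (x i)) :=
  integrable_finsetSum_measure.2 fun _ _ =>
    (integrable_dirac enorm_lt_top).smul_measure (natCast_ne_top _)

lemma integral_finset_sum_smul_dirac (s : Finset ι) (w : ι → ℕ) (x : ι → α) (f : α → ℝ) :
    ∫ y, f y ∂(∑ i ∈ s, (w i : ℝ≥0∞) • Measure.dirac (x i)) = ∑ i ∈ s, (w i : ℝ) * f (x i) := by
  rw [integral_finsetSum_measure fun _ _ =>
    (integrable_dirac enorm_lt_top).smul_measure (natCast_ne_top _)]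
  simp [integral_smul_measure]

end FiniteAtomic

noncomputable def cubeAtom (N i : ℕ) : ℝ := 2 * i / N

lemma cubeSpectralMeasure_eq (N : ℕ) :
    cubeSpectralMeasure N =
      ((2 ^ N : ℝ≥0∞))⁻¹ •
        ∑ i ∈ range (N + 1), (N.choose i : ℝ≥0∞) • Measure.dirac (cubeAtom N i) :=
  rfl

lemma integrable_cubeSpectralMeasure (N : ℕ) (f : ℝ → ℝ) : Integrable f (cubeSpectralMeasure N) :=
  (integrable_finset_sum_smul_dirac _ _ _ f).smul_measure (by simp)

noncomputable def cubeCoupling (N : ℕ) : Measure (ℝ × ℝ) :=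
  ((2 ^ (N + 1) : ℝ≥0∞))⁻¹ •
    (∑ s ∈ range (N + 1), (N.choose s : ℝ≥0∞) •
        Measure.dirac (cubeAtom N s, cubeAtom (N + 1) s) +
      ∑ s ∈ range (N + 1), (N.choose s : ℝ≥0∞) •
        Measure.dirac (cubeAtom N s, cubeAtom (N + 1) (s + 1)))

lemma integral_cubeCoupling (N : ℕ) (f : ℝ × ℝ → ℝ) :
    ∫ z, f z ∂(cubeCoupling N) = (2 ^ (N + 1) : ℝ)⁻¹ *
      (∑ s ∈ range (N + 1), (N.choose s : ℝ) * f (cubeAtom N s, cubeAtom (N + 1) s) +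
        ∑ s ∈ range (N + 1), (N.choose s : ℝ) * f (cubeAtom N s, cubeAtom (N + 1) (s + 1))) := by
  rw [cubeCoupling, integral_smul_measure, integral_add_measure
    (integrable_finset_sum_smul_dirac _ _ _ f) (integrable_finset_sum_smul_dirac _ _ _ f),
    integral_finset_sum_smul_dirac, integral_finset_sum_smul_dirac]
  simp

lemma map_fst_cubeCoupling (N : ℕ) : (cubeCoupling N).map Prod.fst = cubeSpectralMeasure N := by
  simp only [cubeCoupling, Measure.map_smul, Measure.map_add _ _ measurable_fst,
    Measure.map_finset_sum measurable_fst.aemeasurable, Measure.map_dirac' measurable_fst]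
  rw [← two_smul ℝ≥0∞, smul_smul, cubeSpectralMeasure_eq, pow_succ,
    ENNReal.mul_inv (by simp) (by simp), mul_assoc, ENNReal.inv_mul_cancel two_ne_zero ofNat_ne_top,
    mul_one]

lemma map_snd_cubeCoupling (N : ℕ) :
    (cubeCoupling N).map Prod.snd = cubeSpectralMeasure (N + 1) := by
  rw [cubeSpectralMeasure_eq]
  simp only [cubeCoupling, Measure.map_smul, Measure.map_add _ _ measurable_snd,
    Measure.map_finset_sum measurable_snd.aemeasurable, Measure.map_dirac' measurable_snd,
    Nat.cast_smul_eq_nsmul]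
  rw [sum_choose_succ_nsmul (fun i _ => Measure.dirac (cubeAtom (N + 1) i)) N]

-- The difference of the two sides factors as `(s - i)(2N + 1 - i - s)` or `(i + s)(i - s - 1)`.
lemma mul_sub_le_mul_sub_sub_one_add_abs (N i s : ℤ) (hi₀ : 0 ≤ i) (hi : i ≤ N + 1) (hs₀ : 0 ≤ s)
    (hs : s ≤ N) :
    s * (s - N) ≤ i * (i - N - 1) + |s * (N + 1) - i * N| := by
  rcases le_or_gt (i * N) (s * (N + 1)) with h | h
  · rw [abs_of_nonneg (sub_nonneg.2 h)]
    have : 0 ≤ (s - i) * (2 * N + 1 - i - s) := by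
      rcases le_or_gt i s with his | his
      · exact mul_nonneg (by linarith) (by linarith)
      · obtain rfl : s = N := by nlinarith
        obtain rfl : i = s + 1 := by omega
        simp [two_mul]
    linear_combination this
  · rw [abs_of_neg (sub_neg.2 h)]
    have his : s < i := by nlinarith
    linear_combination mul_nonneg (by linarith : 0 ≤ i + s) (by linarith : 0 ≤ i - s - 1)

-- The apex values `2i(i-N-1)/(N(N+1))` make consecutive cones meet exactly at the atoms `2s/N`.
noncomputable def cubePotential (N : ℕ) (x : ℝ) : ℝ :=
  (range (N + 2)).inf' nonempty_range_add_one fun i : ℕ =>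
    (2 * i * (i - N - 1) / (N * (N + 1)) : ℝ) + |x - cubeAtom (N + 1) i|

lemma lipschitzWith_cubePotential (N : ℕ) : LipschitzWith 1 (cubePotential N) :=
  lipschitzWith_inf'_add_abs_sub _ _ _

lemma cubePotential_cubeAtom_succ_le (N : ℕ) {i : ℕ} (hi : i ≤ N + 1) :
    cubePotential N (cubeAtom (N + 1) i) ≤ 2 * i * (i - N - 1) / (N * (N + 1)) := by
  refine (inf'_le _ (mem_range.2 (Nat.lt_succ_of_le hi))).trans_eq ?_
  simp

lemma cubeAtom_sub_cubeAtom_succ {N : ℕ} (hN : 1 ≤ N) (s i : ℕ) :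
    cubeAtom N s - cubeAtom (N + 1) i = 2 * (s * (N + 1) - i * N) / (N * (N + 1)) := by
  have hN' : (N : ℝ) ≠ 0 := by positivity
  simp only [cubeAtom]
  push_cast
  field_simp

lemma le_cubePotential_cubeAtom {N : ℕ} (hN : 1 ≤ N) {s : ℕ} (hs : s ≤ N) :
    2 * s * (s - N) / (N * (N + 1)) ≤ cubePotential N (cubeAtom N s) := by
  refine le_inf' _ _ fun i hi => ?_
  have hi : i ≤ N + 1 := Nat.lt_succ_iff.1 (mem_range.1 hi)
  have key : (s : ℝ) * (s - N) ≤ i * (i - N - 1) + |(s : ℝ) * (N + 1) - i * N| := by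
    exact_mod_cast mul_sub_le_mul_sub_sub_one_add_abs (N : ℤ) i s (by positivity)
      (by exact_mod_cast hi) (by positivity) (by exact_mod_cast hs)
  have hpos : (0 : ℝ) < N * (N + 1) := by positivity
  rw [cubeAtom_sub_cubeAtom_succ hN, abs_div, abs_of_pos hpos, abs_mul, abs_two, ← add_div,
    div_le_div_iff_of_pos_right hpos]
  linarith

lemma abs_sub_le_cubePotential_sub {N : ℕ} (hN : 1 ≤ N) {s i : ℕ} (hs : s ≤ N)
    (hi : i = s ∨ i = s + 1) :
    |cubeAtom N s - cubeAtom (N + 1) i| ≤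
      cubePotential N (cubeAtom N s) - cubePotential N (cubeAtom (N + 1) i) := by
  have hp := le_cubePotential_cubeAtom hN hs
  have hq := cubePotential_cubeAtom_succ_le N (by omega : i ≤ N + 1)
  have hpos : (0 : ℝ) < N * (N + 1) := by positivity
  have hs' : (s : ℝ) ≤ N := by exact_mod_cast hs
  rw [cubeAtom_sub_cubeAtom_succ hN]
  rcases hi with hi | hi <;> subst i
  · rw [abs_of_nonneg (div_nonneg (by nlinarith) hpos.le)]
    have : 2 * (s * (N + 1) - s * N) / (N * (N + 1)) =
        2 * s * (s - N) / (N * (N + 1)) - 2 * s * (s - N - 1) / (N * (N + 1) : ℝ) := by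
      field_simp; ring
    linarith
  · push_cast at hq ⊢
    rw [abs_of_nonpos (div_nonpos_of_nonpos_of_nonneg (by nlinarith) hpos.le)]
    have : -(2 * (s * (N + 1) - (s + 1) * N) / (N * (N + 1))) =
        2 * s * (s - N) / (N * (N + 1)) - 2 * (s + 1) * (s + 1 - N - 1) / (N * (N + 1) : ℝ) := by
      field_simp; ring
    linarith

lemma abs_sub_add_abs_sub_cubeAtom {N : ℕ} (hN : 1 ≤ N) {s : ℕ} (hs : s ≤ N) :
    |cubeAtom N s - cubeAtom (N + 1) s| + |cubeAtom N s - cubeAtom (N + 1) (s + 1)| =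
      2 / (N + 1) := by
  have hpos : (0 : ℝ) < N * (N + 1) := by positivity
  have hs' : (s : ℝ) ≤ N := by exact_mod_cast hs
  rw [cubeAtom_sub_cubeAtom_succ hN, cubeAtom_sub_cubeAtom_succ hN, Nat.cast_succ,
    abs_of_nonneg (div_nonneg (by nlinarith) hpos.le),
    abs_of_nonpos (div_nonpos_of_nonpos_of_nonneg (by nlinarith) hpos.le)]
  field_simp
  ring

lemma integral_abs_sub_cubeCoupling {N : ℕ} (hN : 1 ≤ N) :
    ∫ z, |z.1 - z.2| ∂(cubeCoupling N) = 1 / (N + 1) := by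
  rw [integral_cubeCoupling, ← sum_add_distrib]
  have hterm : ∀ s ∈ range (N + 1), (N.choose s : ℝ) * |cubeAtom N s - cubeAtom (N + 1) s| +
      N.choose s * |cubeAtom N s - cubeAtom (N + 1) (s + 1)| = N.choose s * (2 / (N + 1)) := by
    intro s hs
    rw [← mul_add, abs_sub_add_abs_sub_cubeAtom hN (Nat.lt_succ_iff.1 (mem_range.1 hs))]
  rw [sum_congr rfl hterm, ← sum_mul, ← Nat.cast_sum, Nat.sum_range_choose]
  field_simp
  push_cast
  ring

lemma integral_abs_sub_cubeCoupling_le {N : ℕ} (hN : 1 ≤ N) {π : Measure (ℝ × ℝ)}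
    (h₁ : π.map Prod.fst = cubeSpectralMeasure N)
    (h₂ : π.map Prod.snd = cubeSpectralMeasure (N + 1)) :
    ∫ z, |z.1 - z.2| ∂(cubeCoupling N) ≤ ∫ z, |z.1 - z.2| ∂π := by
  let g := cubePotential N
  have hg := integrable_cubeSpectralMeasure N g
  have hg' := integrable_cubeSpectralMeasure (N + 1) g
  calc ∫ z, |z.1 - z.2| ∂(cubeCoupling N) ≤ ∫ z, (g z.1 - g z.2) ∂(cubeCoupling N) := by
        rw [integral_cubeCoupling, integral_cubeCoupling]
        gcongr with s hs s hs <;>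
          exact abs_sub_le_cubePotential_sub hN (Nat.lt_succ_iff.1 (mem_range.1 hs)) (by simp)
    _ = ∫ x, g x ∂(cubeSpectralMeasure N) - ∫ x, g x ∂(cubeSpectralMeasure (N + 1)) :=
        integral_comp_fst_sub_comp_snd (map_fst_cubeCoupling N) (map_snd_cubeCoupling N) hg hg'
    _ ≤ ∫ z, |z.1 - z.2| ∂π :=
        integral_sub_le_integral_abs_sub_of_lipschitzWith h₁ h₂
          (integrable_cubeSpectralMeasure N id) (integrable_cubeSpectralMeasure (N + 1) id)
          (lipschitzWith_cubePotential N) hg hg'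

theorem stmt_14 (N : ℕ) (hN : 1 ≤ N) :
    wassersteinDist 1 (cubeSpectralMeasure N) (cubeSpectralMeasure (N + 1))
      = 1 / ((N : ℝ) + 1) := by
  simp only [wassersteinDist, Real.rpow_one, div_one]
  refine IsLeast.csInf_eq ⟨⟨cubeCoupling N, map_fst_cubeCoupling N, map_snd_cubeCoupling N,
    (integral_abs_sub_cubeCoupling hN).symm⟩, ?_⟩
  rintro c ⟨π, h₁, h₂, rfl⟩
  exact (integral_abs_sub_cubeCoupling hN).symm.trans_le
    (integral_abs_sub_cubeCoupling_le hN h₁ h₂)
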